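/- arXiv:0711.3176 — 4 statements merged into one kernel-verified Lean document; each statement's English description precedes it below -/
import Mathlib

section
/- Let E = {1,…,M}, let ρ : 2^E → ℝ be defined by ρ(U) = I(X_U; Y) for mutually independent X_1,…,X_M, and let R be a nonnegative modular rate function. Then no nonempty subset of E is decodable (with the complement treated as noise) if and only if R(U) > ρ(U) for all nonempty U ⊆ E. -/
variable {E : Type*} [DecidableEq E] [Fintype E]

/-- Abstract conditional mutual information `I T W = I(X_T; Y | X_W)` satisfies
the chain rule for pairwise disjoint sets of indices of the independent `X_i`. -/
def ChainRule (I : Finset E → Finset E → ℝ) : Prop :=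
  ∀ T S W : Finset E, Disjoint T S → Disjoint T W → Disjoint S W →
    I (T ∪ S) W = I T (S ∪ W) + I S W

/-- Independent-conditioning monotonicity: conditioning on more of the mutually
independent `X_i` cannot decrease the mutual information with `Y`. -/
def CondMono (I : Finset E → Finset E → ℝ) : Prop :=
  ∀ T W W' : Finset E, W ⊆ W' → Disjoint T W' → I T W ≤ I T W'

/-- Nonnegativity of conditional mutual information. -/
def CMINonneg (I : Finset E → Finset E → ℝ) : Prop :=
  ∀ T W : Finset E, 0 ≤ I T W

/-- A subset `S` is decodable if `R(T) ≤ I(X_T; Y | X_{S∖T})` for all `T ⊆ S`. -/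
def Decodable (I : Finset E → Finset E → ℝ) (r : E → ℝ) (S : Finset E) : Prop :=
  ∀ T ⊆ S, ∑ i ∈ T, r i ≤ I T (S \ T)

/-- No nonempty subset of `E` is decodable (with the complement treated as noise) iff
`R(U) > I(X_U; Y)` for every nonempty `U ⊆ E`. -/
theorem no_decodable_subset_iff
    (I : Finset E → Finset E → ℝ) (hchain : ChainRule I) (hmono : CondMono I)
    (hnonneg : CMINonneg I) (r : E → ℝ) (hr : ∀ i, 0 ≤ r i) :
    (∀ S : Finset E, S.Nonempty → ¬ Decodable I r S) ↔
    (∀ U : Finset E, U.Nonempty → I U ∅ < ∑ i ∈ U, r i) := by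
  have aux : ∀ n : ℕ, ∀ W : Finset E, W.card ≤ n → W.Nonempty →
      (∑ i ∈ W, r i) ≤ I W ∅ → ∃ S : Finset E, S.Nonempty ∧ Decodable I r S := by
    intro n
    induction n with
    | zero =>
      intro W hcard hne _
      exact absurd (Finset.card_pos.mpr hne) (by omega)
    | succ n ih =>
      intro W hcard hne hW
      by_cases hdec : Decodable I r W
      · exact ⟨W, hne, hdec⟩
      · simp only [Decodable, not_forall] at hdec
        obtain ⟨T, hTW, hviol⟩ := hdec
        push_neg at hviol
        have hTne : T.Nonempty := by
          rcases T.eq_empty_or_nonempty with h | h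
          · exfalso
            rw [h] at hviol
            simp at hviol
            exact absurd (hnonneg ∅ W) (not_le.mpr hviol)
          · exact h
        have hTneW : T ≠ W := by
          intro h
          rw [h] at hviol
          simp at hviol
          linarith
        set V := W \ T with hV
        have hVne : V.Nonempty := by
          obtain ⟨x, hxW, hxT⟩ := Finset.exists_of_ssubset (hTW.ssubset_of_ne hTneW)
          exact ⟨x, Finset.mem_sdiff.mpr ⟨hxW, hxT⟩⟩
        have hunion : T ∪ V = W := Finset.union_sdiff_of_subset hTW
        have hdisj : Disjoint T V := Finset.disjoint_sdiff
        have hchain' := hchain T V ∅ hdisj (Finset.disjoint_empty_right _)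
          (Finset.disjoint_empty_right _)
        rw [hunion, Finset.union_empty] at hchain'
        have hsum : ∑ i ∈ V, r i + ∑ i ∈ T, r i = ∑ i ∈ W, r i :=
          Finset.sum_sdiff hTW
        have hVineq : ∑ i ∈ V, r i ≤ I V ∅ := by linarith
        have hVcard : V.card < W.card := Finset.card_lt_card (Finset.sdiff_ssubset hTW hTne)
        exact ih V (by omega) hVne hVineq
  constructor
  · intro hno U hUne
    by_contra hnotlt
    push_neg at hnotlt
    obtain ⟨S, hSne, hSdec⟩ := aux U.card U le_rfl hUne hnotlt
    exact hno S hSne hSdec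
  · intro hstrict S hSne hSdec
    have h := hSdec S (le_refl S)
    rw [Finset.sdiff_self] at h
    exact absurd h (not_le.mpr (hstrict S hSne))
end

section
/- Let E be a finite set, R a nonnegative modular function, and I(·;·|·) satisfy the chain rule and independent-conditioning monotonicity as above. A subset S ⊆ E is the maximum decodable subset if and only if (i) R(V) ≤ I(X_V; Y | X_{S∖V}) for all V ⊆ S, and (ii) R(U) > I(X_U; Y | X_S) for all nonempty U ⊆ E∖S. -/
variable {E : Type*} [DecidableEq E] [Fintype E]

/-- Characterization of the maximum decodable subset: `S` is decodable and contains every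
decodable subset iff (i) `R(V) ≤ I(X_V;Y|X_{S∖V})` for all `V ⊆ S` and
(ii) `R(U) > I(X_U;Y|X_S)` for all nonempty `U ⊆ E∖S`. -/
theorem maximum_decodable_subset_characterization
    (I : Finset E → Finset E → ℝ) (hchain : ChainRule I) (hmono : CondMono I)
    (hnonneg : CMINonneg I) (r : E → ℝ) (hr : ∀ i, 0 ≤ r i) (S : Finset E) :
    (Decodable I r S ∧ ∀ U : Finset E, Decodable I r U → U ⊆ S) ↔
    ((∀ V ⊆ S, ∑ i ∈ V, r i ≤ I V (S \ V)) ∧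
     (∀ U ⊆ Finset.univ \ S, U.Nonempty → I U S < ∑ i ∈ U, r i)) := by
  classical
  constructor
  · rintro ⟨hdec, hmax⟩
    refine ⟨hdec, ?_⟩
    intro U hU hUne
    by_contra hlt
    push_neg at hlt
    have hUS : Disjoint U S := (Finset.subset_sdiff.mp hU).2
    obtain ⟨V, hVmem, hVmin⟩ := Finset.exists_min_image
      ((U.powerset).filter (fun V => V.Nonempty ∧ ∑ i ∈ V, r i ≤ I V S))
      Finset.card ⟨U, by simp [hUne, hlt]⟩
    simp only [Finset.mem_filter, Finset.mem_powerset] at hVmem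
    obtain ⟨hVU, hVne, hVle⟩ := hVmem
    have hVS : Disjoint V S := hUS.mono_left hVU
    -- key property of the minimal V
    have key : ∀ T ⊆ V, ∑ i ∈ T, r i ≤ I T (S ∪ (V \ T)) := by
      intro T hT
      rcases T.eq_empty_or_nonempty with rfl | hTne
      · simpa using hnonneg ∅ (S ∪ (V \ ∅))
      rcases eq_or_ne T V with rfl | hTV
      · simpa using hVle
      · have hVTne : (V \ T).Nonempty := by
          rw [Finset.sdiff_nonempty]
          exact fun h => hTV (Finset.Subset.antisymm hT h)
        have hcard : (V \ T).card < V.card :=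
          Finset.card_lt_card (Finset.sdiff_ssubset hT hTne)
        have hVTlt : I (V \ T) S < ∑ i ∈ V \ T, r i := by
          by_contra hcon
          push_neg at hcon
          have hmem : (V \ T) ∈ (U.powerset).filter
              (fun W => W.Nonempty ∧ ∑ i ∈ W, r i ≤ I W S) := by
            simp only [Finset.mem_filter, Finset.mem_powerset]
            exact ⟨(Finset.sdiff_subset).trans hVU, hVTne, hcon⟩
          exact absurd (hVmin _ hmem) (by omega)
        have hdTVT : Disjoint T (V \ T) := Finset.disjoint_sdiff
        have hdTS : Disjoint T S := hVS.mono_left hT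
        have hdVTS : Disjoint (V \ T) S := hVS.mono_left Finset.sdiff_subset
        have hch := hchain T (V \ T) S hdTVT hdTS hdVTS
        rw [Finset.union_sdiff_of_subset hT] at hch
        have hsum : ∑ i ∈ V \ T, r i + ∑ i ∈ T, r i = ∑ i ∈ V, r i :=
          Finset.sum_sdiff hT
        rw [Finset.union_comm S (V \ T)]
        linarith
    -- S ∪ V is decodable
    have hdecSV : Decodable I r (S ∪ V) := by
      intro T hT
      set TS := T ∩ S with hTSdef
      set TV := T ∩ V with hTVdef
      set W := (S ∪ V) \ T with hWdef
      have hdSVi : ∀ i, i ∈ S → i ∉ V := fun i hi =>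
        Finset.disjoint_right.mp hVS hi
      have hTeq : TV ∪ TS = T := by
        rw [hTVdef, hTSdef, ← Finset.inter_union_distrib_left]
        exact Finset.inter_eq_left.mpr (by rwa [Finset.union_comm V S])
      have hdTVTS : Disjoint TV TS :=
        Finset.disjoint_left.mpr fun i hiv his =>
          hdSVi i (Finset.mem_inter.mp his).2 (Finset.mem_inter.mp hiv).2
      have hdTVW : Disjoint TV W :=
        Finset.disjoint_sdiff.mono_left Finset.inter_subset_left
      have hdTSW : Disjoint TS W :=
        Finset.disjoint_sdiff.mono_left Finset.inter_subset_left
      have hch := hchain TV TS W hdTVTS hdTVW hdTSW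
      rw [hTeq] at hch
      -- I TS W ≥ I TS (S \ TS) ≥ ∑_{TS}
      have hTS_S : TS ⊆ S := Finset.inter_subset_right
      have h1 : ∑ i ∈ TS, r i ≤ I TS (S \ TS) := hdec TS hTS_S
      have hsub1 : S \ TS ⊆ W := by
        intro i hi
        rw [Finset.mem_sdiff] at hi
        rw [hWdef, Finset.mem_sdiff]
        refine ⟨Finset.mem_union_left _ hi.1, fun hiT => hi.2 ?_⟩
        exact Finset.mem_inter.mpr ⟨hiT, hi.1⟩
      have h1' : I TS (S \ TS) ≤ I TS W := hmono TS _ _ hsub1 hdTSW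
      -- I TV (TS ∪ W) = I TV (S ∪ (V \ TV)) ≥ ∑_{TV}
      have hset : TS ∪ W = S ∪ (V \ TV) := by
        ext i
        simp only [hTSdef, hTVdef, hWdef, Finset.mem_union, Finset.mem_sdiff,
          Finset.mem_inter]
        have := hdSVi i
        tauto
      have h2 : ∑ i ∈ TV, r i ≤ I TV (S ∪ (V \ TV)) :=
        key TV Finset.inter_subset_right
      rw [hset] at hch
      have hsum : ∑ i ∈ TV, r i + ∑ i ∈ TS, r i = ∑ i ∈ T, r i := by
        rw [← hTeq]
        exact (Finset.sum_union hdTVTS).symm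
      linarith
    have hsub := hmax (S ∪ V) hdecSV
    obtain ⟨x, hx⟩ := hVne
    exact Finset.disjoint_left.mp hVS hx
      (hsub (Finset.mem_union_right _ hx))
  · rintro ⟨h1, h2⟩
    refine ⟨h1, ?_⟩
    intro U hUdec
    intro x hx
    by_contra hxS
    have hWne : (U \ S).Nonempty := ⟨x, Finset.mem_sdiff.mpr ⟨hx, hxS⟩⟩
    have h2' := h2 (U \ S)
      (Finset.sdiff_subset_sdiff (Finset.subset_univ U) le_rfl) hWne
    have hd := hUdec (U \ S) Finset.sdiff_subset
    rw [Finset.sdiff_sdiff_self_left] at hd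
    have hm : I (U \ S) (U ∩ S) ≤ I (U \ S) S :=
      hmono _ _ _ Finset.inter_subset_right Finset.sdiff_disjoint
    linarith
end

section
/- Define f(V) = I(X_V; Y | X_{E∖V}) − R(V) for V ⊆ E, with I conditional mutual information of mutually independent X_i and R modular. Let W be a minimizer of f over 2^E of minimum cardinality, and suppose f(W) < 0 (i.e., the minimum is not zero). Then W is disjoint from the maximum decodable subset S, i.e., W ∩ S = ∅. -/
variable {E : Type*} [DecidableEq E] [Fintype E]

/-- If `W` is a minimum-cardinality minimizer of `f(V) = I(X_V;Y|X_{E∖V}) − R(V)` and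
the minimum is negative, then `W` is disjoint from the maximum decodable subset `S`. -/
theorem minimizer_disjoint_from_maximum_decodable
    (I : Finset E → Finset E → ℝ) (hchain : ChainRule I) (hmono : CondMono I)
    (hnonneg : CMINonneg I) (r : E → ℝ) (hr : ∀ i, 0 ≤ r i)
    (f : Finset E → ℝ)
    (hf : ∀ V : Finset E, f V = I V (Finset.univ \ V) - ∑ i ∈ V, r i)
    (W : Finset E)
    (hmin : ∀ V : Finset E, f W ≤ f V)
    (hcard : ∀ V : Finset E, f V = f W → W.card ≤ V.card)
    (hneg : f W < 0)
    (S : Finset E)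
    (hS : Decodable I r S ∧ ∀ U : Finset E, Decodable I r U → U ⊆ S) :
    W ∩ S = ∅ := by

  classical
  set T : Finset E := W \ S with hT
  set U : Finset E := W ∩ S with hU
  have hTU : Disjoint T U := by
    simp [hT, hU, Finset.disjoint_left]; tauto
  have hTc : Disjoint T (Finset.univ \ W) := by
    simp [hT, Finset.disjoint_left]; tauto
  have hUc : Disjoint U (Finset.univ \ W) := by
    simp [hU, Finset.disjoint_left]; tauto
  have hW : T ∪ U = W := by
    ext x; simp [hT, hU]; tauto
  have hUnion : U ∪ (Finset.univ \ W) = Finset.univ \ T := by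
    ext x; simp [hT, hU]; tauto
  have hchainW : I W (Finset.univ \ W) = I T (Finset.univ \ T) + I U (Finset.univ \ W) := by
    have := hchain T U (Finset.univ \ W) hTU hTc hUc
    rw [hW, hUnion] at this
    exact this
  have hsum : ∑ i ∈ W, r i = ∑ i ∈ T, r i + ∑ i ∈ U, r i := by
    rw [← hW, Finset.sum_union hTU]
  have hfW : f W = f T + (I U (Finset.univ \ W) - ∑ i ∈ U, r i) := by
    rw [hf W, hf T, hchainW, hsum]; ring
  -- decodability bound
  have hUS : U ⊆ S := Finset.inter_subset_right
  have hdec : ∑ i ∈ U, r i ≤ I U (S \ U) := hS.1 U hUS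
  have hSU : S \ U = S \ W := by ext x; simp [hU]
  have hsub : S \ W ⊆ Finset.univ \ W :=
    Finset.sdiff_subset_sdiff (Finset.subset_univ S) le_rfl
  have hmonoU : I U (S \ U) ≤ I U (Finset.univ \ W) := by
    rw [hSU]; exact hmono U (S \ W) (Finset.univ \ W) hsub hUc
  have hle : f T ≤ f W := by
    have : 0 ≤ I U (Finset.univ \ W) - ∑ i ∈ U, r i := by
      linarith [hdec.trans hmonoU]
    linarith [hfW]
  have heq : f T = f W := le_antisymm hle (hmin T)
  have hcardle : W.card ≤ T.card := hcard T heq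
  have hTW : T ⊆ W := Finset.sdiff_subset
  have : T = W := Finset.eq_of_subset_of_card_le hTW hcardle
  have hUe : U = ∅ := by
    rw [Finset.eq_empty_iff_forall_notMem]
    intro x hx
    have hxW : x ∈ W := hW ▸ Finset.mem_union_right T hx
    have hxT : x ∈ T := this ▸ hxW
    exact Finset.disjoint_left.mp hTU hxT hx
  exact hUe
end

section
/- The iterative algorithm that starts with S = E and repeatedly replaces S by S ∖ W, where W is a minimum-cardinality minimizer of f_S(V) = I(X_V; Y | X_{S∖V}) − R(V) over V ⊆ S (treating E∖S as noise), terminates in at most |E| iterations and terminates exactly at the maximum decodable subset. -/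
variable {E : Type*} [DecidableEq E] [Fintype E]

private lemma I_empty {I : Finset E → Finset E → ℝ} (hchain : ChainRule I)
    (V : Finset E) : I ∅ V = 0 := by
  have := hchain ∅ ∅ V (by simp) (by simp) (by simp)
  simp at this
  linarith

/-- The iterative algorithm `S ← S ∖ W`, where `W` is a minimum-cardinality minimizer of
`f_S(V) = I(X_V;Y|X_{S∖V}) − R(V)` over `V ⊆ S`, starting from `S = E`, terminates in at
most `|E|` iterations, exactly at the maximum decodable subset. -/
theorem algorithm_finds_maximum_decodable_subset
    (I : Finset E → Finset E → ℝ) (hchain : ChainRule I) (hmono : CondMono I)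
    (hnonneg : CMINonneg I) (r : E → ℝ) (hr : ∀ i, 0 ≤ r i)
    (fS : Finset E → Finset E → ℝ)
    (hfS : ∀ S V : Finset E, fS S V = I V (S \ V) - ∑ i ∈ V, r i)
    (W : Finset E → Finset E)
    (hWsub : ∀ S : Finset E, W S ⊆ S)
    (hWmin : ∀ S : Finset E, ∀ V ⊆ S, fS S (W S) ≤ fS S V)
    (hWcard : ∀ S : Finset E, ∀ V ⊆ S, fS S V = fS S (W S) → (W S).card ≤ V.card)
    (Seq : ℕ → Finset E)
    (hSeq0 : Seq 0 = Finset.univ)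
    (hSeqStep : ∀ n, Seq (n + 1) = Seq n \ W (Seq n)) :
    Seq (Fintype.card E + 1) = Seq (Fintype.card E) ∧
    Decodable I r (Seq (Fintype.card E)) ∧
    (∀ U : Finset E, Decodable I r U → U ⊆ Seq (Fintype.card E)) := by
  set N := Fintype.card E with hN
  -- fS S ∅ = 0
  have hf0 : ∀ S : Finset E, fS S ∅ = 0 := by
    intro S
    rw [hfS]
    simp [I_empty hchain]
  -- Key lemma: any decodable subset of S is disjoint from W S
  have hdisj : ∀ S U : Finset E, Decodable I r U → U ⊆ S → Disjoint U (W S) := by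
    intro S U hU hUS
    by_contra hnd
    rw [Finset.not_disjoint_iff_nonempty_inter] at hnd
    set T := U ∩ W S with hT
    set Wn := W S with hWn
    have hTW : T ⊆ Wn := Finset.inter_subset_right
    have hTU : T ⊆ U := Finset.inter_subset_left
    have hWsubS : Wn ⊆ S := hWsub S
    have hTS : T ⊆ S := hTW.trans hWsubS
    have hUn : (Wn \ T) ∪ T = Wn := Finset.sdiff_union_of_subset hTW
    have hdisj1 : Disjoint (Wn \ T) T := Finset.sdiff_disjoint
    have hdisj3 : Disjoint T (S \ Wn) :=
      Finset.disjoint_of_subset_left hTW Finset.sdiff_disjoint.symm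
    have hdisj2 : Disjoint (Wn \ T) (S \ Wn) :=
      Finset.disjoint_of_subset_left Finset.sdiff_subset Finset.sdiff_disjoint.symm
    have hch := hchain (Wn \ T) T (S \ Wn) hdisj1 hdisj2 hdisj3
    rw [hUn] at hch
    have hset : T ∪ (S \ Wn) = S \ (Wn \ T) := by
      ext x
      simp only [Finset.mem_union, Finset.mem_sdiff]
      constructor
      · rintro (hx | ⟨hxS, hxW⟩)
        · exact ⟨hTS hx, fun h => h.2 hx⟩
        · exact ⟨hxS, fun h => hxW h.1⟩
      · rintro ⟨hxS, hx⟩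
        by_cases hxW : x ∈ Wn
        · by_cases hxT : x ∈ T
          · exact Or.inl hxT
          · exact absurd ⟨hxW, hxT⟩ hx
        · exact Or.inr ⟨hxS, hxW⟩
    rw [hset] at hch
    -- decodability bound
    have hdec := hU T hTU
    have hUT : U \ T ⊆ S \ Wn := by
      intro x hx
      rw [Finset.mem_sdiff] at hx ⊢
      refine ⟨hUS hx.1, fun hxW => hx.2 ?_⟩
      exact Finset.mem_inter.mpr ⟨hx.1, hxW⟩
    have hmono' := hmono T (U \ T) (S \ Wn) hUT hdisj3
    have hsum : ∑ i ∈ Wn \ T, r i + ∑ i ∈ T, r i = ∑ i ∈ Wn, r i :=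
      Finset.sum_sdiff hTW
    have hle : fS S (Wn \ T) ≤ fS S Wn := by
      rw [hfS, hfS]
      have h1 : ∑ i ∈ T, r i ≤ I T (S \ Wn) := le_trans hdec hmono'
      linarith
    have hsub' : Wn \ T ⊆ S := Finset.sdiff_subset.trans hWsubS
    have heq : fS S (Wn \ T) = fS S Wn := le_antisymm hle (hWmin S _ hsub')
    have hcard := hWcard S (Wn \ T) hsub' heq
    rw [← hWn] at hcard
    have hcs : (Wn \ T).card = Wn.card - T.card := Finset.card_sdiff_of_subset hTW
    have hTpos : 0 < T.card := Finset.card_pos.mpr hnd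
    have hTle : T.card ≤ Wn.card := Finset.card_le_card hTW
    omega
  -- stability once W is empty
  have hstab : ∀ m k, W (Seq m) = ∅ → Seq (m + k) = Seq m := by
    intro m k hm
    induction k with
    | zero => rfl
    | succ k ih =>
      rw [← Nat.add_assoc, hSeqStep, ih, hm, Finset.sdiff_empty]
  -- the final W is empty
  have hWN : W (Seq N) = ∅ := by
    have hcard : ∀ n : ℕ, (∃ m ≤ n, W (Seq m) = ∅) ∨ (Seq n).card + n ≤ N := by
      intro n
      induction n with
      | zero => right; simp [hSeq0, hN]
      | succ n ih =>
        rcases ih with ⟨m, hm, h⟩ | h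
        · exact Or.inl ⟨m, hm.trans (Nat.le_succ n), h⟩
        · by_cases hW : W (Seq n) = ∅
          · exact Or.inl ⟨n, Nat.le_succ n, hW⟩
          · right
            have hne := Finset.nonempty_iff_ne_empty.mpr hW
            have h1 : (Seq (n + 1)).card = (Seq n).card - (W (Seq n)).card := by
              rw [hSeqStep, Finset.card_sdiff_of_subset (hWsub (Seq n))]
            have h2 : 0 < (W (Seq n)).card := Finset.card_pos.mpr hne
            have h3 : (W (Seq n)).card ≤ (Seq n).card :=
              Finset.card_le_card (hWsub (Seq n))
            omega
    rcases hcard N with ⟨m, hm, h⟩ | h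
    · have := hstab m (N - m) h
      rw [Nat.add_sub_cancel' hm] at this
      rw [this, h]
    · have : (Seq N).card = 0 := by omega
      have hempty : Seq N = ∅ := Finset.card_eq_zero.mp this
      rw [hempty]
      exact Finset.subset_empty.mp (hWsub ∅)
  refine ⟨?_, ?_, ?_⟩
  · rw [hSeqStep, hWN, Finset.sdiff_empty]
  · intro T hT
    have := hWmin (Seq N) T hT
    rw [hWN, hf0, hfS] at this
    linarith
  · intro U hU
    have hind : ∀ n, U ⊆ Seq n := by
      intro n
      induction n with
      | zero => rw [hSeq0]; exact Finset.subset_univ U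
      | succ n ih =>
        rw [hSeqStep]
        exact Finset.subset_sdiff.mpr ⟨ih, hdisj (Seq n) U hU ih⟩
    exact hind N
end
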